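/- For a positive even integer n, the number of group endomorphisms of the dihedral group D_n is (n + 2)². -/

import Mathlib

/-!
The dihedral group is presented by `⟨r, s | rⁿ, s², srs = r⁻¹⟩`, so an endomorphism of `D_n` is
the same thing as a pair `(x, y)` with `xⁿ = 1`, `y² = 1` and `yxy = x⁻¹`; for even `n` the
exponent of `D_n` is `n`, so the first condition is automatic. Let `τ` be the number of `b` in
`ZMod n` with `2b = 0`. Every reflection inverts every rotation (`n²` pairs), a rotation `r b` is
an involution inverting `r a` iff `2a = 2b = 0` (`τ²` pairs), `r b` is one inverting `sr a` iff
`2b = 0` (`nτ` pairs) and `sr b` inverts `sr a` iff `2b = 2a` (`nτ` pairs). This gives `(n + τ)²`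
endomorphisms, and `τ = 2` for even `n`.
-/

open DihedralGroup Finset

section PowVal

variable {M : Type*} [Monoid M] {n : ℕ} {x : M}

lemma pow_val_add [NeZero n] (hx : x ^ n = 1) (i j : ZMod n) :
    x ^ (i + j).val = x ^ i.val * x ^ j.val := by
  rw [ZMod.val_add, ← pow_eq_pow_mod _ hx, pow_add]

lemma pow_val_one (hx : x ^ n = 1) : x ^ (1 : ZMod n).val = x := by
  rw [ZMod.val_one_eq_one_mod, ← pow_eq_pow_mod _ hx, pow_one]

end PowVal

lemma pow_val_sub {G : Type*} [Group G] {n : ℕ} [NeZero n] {x : G} (hx : x ^ n = 1)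
    (i j : ZMod n) : x ^ (j - i).val = (x ^ i.val)⁻¹ * x ^ j.val := by
  rw [eq_inv_mul_iff_mul_eq, ← pow_val_add hx, add_sub_cancel]

section InvertingInvolution

variable {G : Type*} [Group G]

def IsInvertingInvolution (y x : G) : Prop :=
  y * y = 1 ∧ y * x * y = x⁻¹

lemma IsInvertingInvolution.pow {x y : G} (h : IsInvertingInvolution y x) (k : ℕ) :
    IsInvertingInvolution y (x ^ k) := by
  have hy : y⁻¹ = y := inv_eq_of_mul_eq_one_right h.1
  refine ⟨h.1, ?_⟩
  calc y * x ^ k * y = (y * x * y⁻¹) ^ k := by rw [conj_pow, hy]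
    _ = (x ^ k)⁻¹ := by rw [hy, h.2, inv_pow]

end InvertingInvolution

lemma card_filter_add_self_eq {A : Type*} [AddCommGroup A] [Fintype A] [DecidableEq A] (a : A) :
    #{b : A | b + b = a + a} = #{b : A | b + b = 0} := by
  refine card_nbij' (· - a) (· + a) (fun b hb => ?_) (fun b hb => ?_)
    (fun b _ => sub_add_cancel b a) (fun b _ => add_sub_cancel_right b a) <;>
    simp only [coe_filter, mem_univ, true_and, Set.mem_ofPred_eq] at hb ⊢
  · rw [sub_add_sub_comm, hb, sub_self]
  · rw [add_add_add_comm, hb, zero_add]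

namespace ZMod

variable {n : ℕ} [NeZero n]

lemma add_self_eq_zero_iff (hn : Even n) {b : ZMod n} :
    b + b = 0 ↔ b = 0 ∨ b = (n / 2 : ℕ) := by
  obtain ⟨m, rfl⟩ := hn
  refine ⟨fun h => ?_, ?_⟩
  · rcases lt_or_ge (b.val + b.val) (m + m) with hlt | hge
    · have hval := val_add_of_lt hlt
      rw [h, val_zero] at hval
      exact .inl ((val_eq_zero b).1 (by omega))
    · have hval := val_add_val_of_le hge
      rw [h, val_zero] at hval
      refine .inr ?_
      rw [← natCast_zmod_val b]
      congr 1
      omega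
  · rintro (rfl | rfl)
    · exact add_zero 0
    · rw [show (m + m) / 2 = m by omega, ← Nat.cast_add, natCast_self]

lemma card_add_self_eq_zero (hn : Even n) : #{b : ZMod n | b + b = 0} = 2 := by
  have hhalf : ((n / 2 : ℕ) : ZMod n) ≠ 0 := by
    rw [Ne, natCast_eq_zero_iff]
    intro h
    have hn0 := NeZero.ne n
    have h2 := hn.two_dvd
    have hle := Nat.le_of_dvd (by omega) h
    omega
  rw [show #{b : ZMod n | b + b = 0} = #{0, ((n / 2 : ℕ) : ZMod n)} by
    congr 1; ext b; simp [add_self_eq_zero_iff hn]]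
  exact card_pair hhalf.symm

end ZMod

namespace DihedralGroup

variable {n : ℕ} {G : Type*} [Group G]

def lift [NeZero n] (x y : G) (hx : x ^ n = 1) (h : IsInvertingInvolution y x) :
    DihedralGroup n →* G where
  toFun
    | r i => x ^ i.val
    | sr i => y * x ^ i.val
  map_one' := by simp [← r_zero]
  map_mul' := by
    -- inverses of powers of `x` are rewritten as conjugates by `y`
    rintro (i | i) (j | j) <;>
      simp only [r_mul_r, r_mul_sr, sr_mul_r, sr_mul_sr, pow_val_add hx, pow_val_sub hx,
        ← (h.pow i.val).2]
    · simp only [← mul_assoc, h.1, one_mul]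
    · rw [mul_assoc]
    · simp only [← mul_assoc]

@[simp]
lemma lift_r_one [NeZero n] (x y : G) (hx : x ^ n = 1) (h : IsInvertingInvolution y x) :
    lift x y hx h (r 1) = x :=
  pow_val_one hx

@[simp]
lemma lift_sr_zero [NeZero n] (x y : G) (hx : x ^ n = 1) (h : IsInvertingInvolution y x) :
    lift x y hx h (sr 0) = y := by
  simp [lift]

lemma hom_ext [NeZero n] {f g : DihedralGroup n →* G} (h₁ : f (r 1) = g (r 1))
    (h₂ : f (sr 0) = g (sr 0)) : f = g := by
  have hr (i : ZMod n) : r i = r 1 ^ i.val := by rw [r_one_pow, ZMod.natCast_zmod_val]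
  have hsr (i : ZMod n) : sr i = sr 0 * r i := by rw [sr_mul_r, zero_add]
  ext (i | i)
  · rw [hr, map_pow, map_pow, h₁]
  · rw [hsr, map_mul, map_mul, h₂, hr, map_pow, map_pow, h₁]

def homEquiv [NeZero n] :
    (DihedralGroup n →* G) ≃ {p : G × G // p.1 ^ n = 1 ∧ IsInvertingInvolution p.2 p.1} where
  toFun f := ⟨(f (r 1), f (sr 0)), by rw [← map_pow, r_one_pow_n, map_one],
    by rw [← map_mul, sr_mul_self, map_one],
    by rw [← map_mul, ← map_mul, ← map_inv, sr_mul_r, sr_mul_sr, inv_r, zero_add, zero_sub]⟩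
  invFun p := lift p.1.1 p.1.2 p.2.1 p.2.2
  left_inv f := hom_ext (lift_r_one _ _ _ _) (lift_sr_zero _ _ _ _)
  right_inv p := Subtype.ext (Prod.ext (lift_r_one _ _ _ _) (lift_sr_zero _ _ _ _))

lemma pow_eq_one_of_even (hn : Even n) (g : DihedralGroup n) : g ^ n = 1 := by
  refine Monoid.exponent_dvd_iff_forall_pow_eq_one.mp ?_ g
  rw [exponent]
  exact lcm_dvd dvd_rfl hn.two_dvd

lemma sum_univ_eq_sum_r_add_sum_sr [NeZero n] {M : Type*} [AddCommMonoid M]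
    (f : DihedralGroup n → M) : ∑ g, f g = ∑ i, f (r i) + ∑ i, f (sr i) := by
  rw [← equivSum.symm.sum_comp, Fintype.sum_sum_type]
  rfl

lemma isInvertingInvolution_r_r_iff (a b : ZMod n) :
    IsInvertingInvolution (r b) (r a) ↔ a + a = 0 ∧ b + b = 0 := by
  simp only [IsInvertingInvolution, r_mul_r, inv_r, one_def, r.injEq]
  exact ⟨fun ⟨h1, h2⟩ => ⟨by linear_combination h2 - h1, h1⟩,
    fun ⟨h1, h2⟩ => ⟨h2, by linear_combination h1 + h2⟩⟩

lemma isInvertingInvolution_sr_r (a b : ZMod n) : IsInvertingInvolution (sr b) (r a) := by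
  simp only [IsInvertingInvolution, sr_mul_self, sr_mul_r, sr_mul_sr, inv_r, r.injEq, true_and]
  ring

lemma isInvertingInvolution_r_sr_iff (a b : ZMod n) :
    IsInvertingInvolution (r b) (sr a) ↔ b + b = 0 := by
  simp only [IsInvertingInvolution, r_mul_r, r_mul_sr, sr_mul_r, inv_sr, one_def, r.injEq,
    sub_add_cancel, and_true]

lemma isInvertingInvolution_sr_sr_iff (a b : ZMod n) :
    IsInvertingInvolution (sr b) (sr a) ↔ b + b = a + a := by
  simp only [IsInvertingInvolution, sr_mul_self, sr_mul_sr, r_mul_sr, inv_sr, sr.injEq, true_and]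
  exact ⟨fun h => by linear_combination h, fun h => by linear_combination h⟩

lemma card_isInvertingInvolution_pairs [NeZero n] :
    Nat.card {p : DihedralGroup n × DihedralGroup n // IsInvertingInvolution p.2 p.1} =
      (n + #{b : ZMod n | b + b = 0}) ^ 2 := by
  classical
  rw [Nat.card_eq_fintype_card, Fintype.card_subtype, card_filter, Fintype.sum_prod_type]
  simp only [sum_univ_eq_sum_r_add_sum_sr, isInvertingInvolution_r_r_iff,
    isInvertingInvolution_sr_r, isInvertingInvolution_r_sr_iff, isInvertingInvolution_sr_sr_iff,
    sum_add_distrib]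
  simp only [ite_and, sum_ite_irrel, sum_boole, Nat.cast_id, sum_const_zero, sum_ite, sum_const,
    smul_eq_mul, add_zero, card_univ, ZMod.card, ↓reduceIte, mul_one, card_filter_add_self_eq]
  ring

end DihedralGroup

theorem numEnd_even (n : ℕ) (hn : 0 < n) (hne : Even n) :
    Nat.card (DihedralGroup n →* DihedralGroup n) = (n + 2) ^ 2 := by
  have : NeZero n := ⟨hn.ne'⟩
  have hpairs : {p : DihedralGroup n × DihedralGroup n // p.1 ^ n = 1 ∧
      IsInvertingInvolution p.2 p.1} ≃
      {p : DihedralGroup n × DihedralGroup n // IsInvertingInvolution p.2 p.1} :=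
    Equiv.subtypeEquivRight fun p => and_iff_right (pow_eq_one_of_even hne p.1)
  rw [Nat.card_congr (homEquiv.trans hpairs), card_isInvertingInvolution_pairs,
    ZMod.card_add_self_eq_zero hne]
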